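/- arXiv:2309.08900 — 3 statements merged into one kernel-verified Lean document; each statement's English description precedes it below -/
import Mathlib

section
/- Let A be a C*-algebra and let a, b be positive elements of A with ‖a − b‖ < ε for some ε > 0. Then (a − ε)₊ is Cuntz subequivalent to b, i.e., there is a sequence (vₙ) in A with ‖vₙ b vₙ* − (a − ε)₊‖ → 0. -/
open Filter

/-- Cuntz subequivalence: `a ≾ b` iff there is a sequence `vₙ` with
`‖vₙ * b * vₙ* - a‖ → 0`. -/
def CuntzLE {A : Type*} [NonUnitalCStarAlgebra A] (a b : A) : Prop :=
  ∃ v : ℕ → A, Tendsto (fun n => ‖v n * b * star (v n) - a‖) atTop (nhds 0)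

/-!
Put `r = ‖a - b‖` and `c = f(a)` with `f(t) = √((t - ε)₊ / t)`. Conjugating `a - b ≤ r` by `c`
gives `c a c - r c² ≤ c b c`, while in the spectrum of `a` the left side is
`(t - ε)₊ - r (t - ε)₊ / t ≥ (1 - r / ε) (t - ε)₊`. Since `0 ≤ x ≤ y` implies `x ≾ y`
(for `v = x^{1/2} g(y)` with `g(t) = √t / (t + η)`, `v y v* = x^{1/2} (y / (y + η))² x^{1/2}` is
within `2η` of `x`), this yields `(1 - r / ε) (a - ε)₊ ≾ c b c ≾ b`, and `r < ε` lets us rescale.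
-/

namespace CuntzLE

variable {A : Type*} [NonUnitalCStarAlgebra A]

lemma of_forall_exists_norm_lt {x y : A}
    (h : ∀ δ > 0, ∃ v : A, ‖v * y * star v - x‖ < δ) : CuntzLE x y := by
  choose v hv using fun n : ℕ => h ((n : ℝ) + 1)⁻¹ (by positivity)
  refine ⟨v, squeeze_zero (fun _ => norm_nonneg _) (fun n => (hv n).le) ?_⟩
  simpa [one_div] using tendsto_one_div_add_atTop_nhds_zero_nat (𝕜 := ℝ)

lemma of_cuntzLE_conj {x y c : A} (h : CuntzLE x (c * y * star c)) : CuntzLE x y := by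
  obtain ⟨v, hv⟩ := h
  refine ⟨fun n => v n * c, hv.congr fun n => ?_⟩
  simp only [star_mul, mul_assoc]

lemma smul_left {x y : A} (h : CuntzLE x y) {t : ℝ} (ht : 0 ≤ t) : CuntzLE (t • x) y := by
  obtain ⟨v, hv⟩ := h
  refine ⟨fun n => Real.sqrt t • v n, ?_⟩
  have key : ∀ n, ‖(Real.sqrt t • v n) * y * star (Real.sqrt t • v n) - t • x‖ =
      t * ‖v n * y * star (v n) - x‖ := fun n => by
    rw [star_smul, star_trivial, smul_mul_assoc, smul_mul_assoc, mul_smul_comm, smul_smul,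
      Real.mul_self_sqrt ht, ← smul_sub, norm_smul, Real.norm_of_nonneg ht]
  have hlim := hv.const_mul t
  rw [mul_zero] at hlim
  exact hlim.congr fun n => (key n).symm

end CuntzLE

lemma cfcₙ_mul_mul_cfcₙ {A : Type*} [NonUnitalCStarAlgebra A] {a : A} (ha : IsSelfAdjoint a)
    {f : ℝ → ℝ} (hf : ContinuousOn f (quasispectrum ℝ a)) (hf0 : f 0 = 0) :
    cfcₙ f a * a * cfcₙ f a = cfcₙ (fun t => f t * t * f t) a := by
  rw [cfcₙ_mul (fun t => f t * t) f a (hf.mul continuousOn_id), cfcₙ_mul f _ a, cfcₙ_id' ℝ a]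

lemma norm_mul_cfc_mul_sub_self_le {B : Type*} [CStarAlgebra B] [PartialOrder B]
    [StarOrderedRing B] {s y : B} (hs : IsSelfAdjoint s) (hsy : s * s ≤ y) {h : ℝ → ℝ}
    (hh : ContinuousOn h (spectrum ℝ y)) (hh1 : ∀ t ∈ spectrum ℝ y, h t ≤ 1) {C : ℝ}
    (hC0 : 0 ≤ C) (hC : ∀ t ∈ spectrum ℝ y, t * (1 - h t) ≤ C) :
    ‖s * cfc h y * s - s * s‖ ≤ C := by
  have hss : 0 ≤ s * s := hs.mul_self_nonneg
  have hy : 0 ≤ y := hss.trans hsy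
  set T := cfc (fun t => Real.sqrt (1 - h t)) y
  have hT : IsSelfAdjoint T := cfc_predicate _ _
  have hTT : T * T = 1 - cfc h y := by
    rw [← cfc_mul .., ← cfc_const_one ℝ y, ← cfc_sub ..]
    exact cfc_congr fun t ht => Real.mul_self_sqrt (sub_nonneg.2 (hh1 t ht))
  have hTyT : T * y * T = cfc (fun t => t * (1 - h t)) y := by
    conv_lhs => rw [← cfc_id' ℝ y]
    rw [← cfc_mul .., ← cfc_mul ..]
    refine cfc_congr fun t ht => ?_
    rw [mul_right_comm, Real.mul_self_sqrt (sub_nonneg.2 (hh1 t ht)), mul_comm]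
  calc ‖s * cfc h y * s - s * s‖ = ‖star (T * s) * (T * s)‖ := by
        rw [← norm_neg, star_mul, hT.star_eq, hs.star_eq, mul_assoc s T, ← mul_assoc T, hTT]
        noncomm_ring
    _ = ‖T * (s * s) * T‖ := by
        rw [CStarRing.norm_star_mul_self, ← CStarRing.norm_self_mul_star, star_mul, hT.star_eq,
          hs.star_eq]
        noncomm_ring
    _ ≤ ‖T * y * T‖ := by
        refine CStarAlgebra.norm_le_norm_of_nonneg_of_le ?_ ?_
        · simpa [hT.star_eq] using star_left_conjugate_nonneg hss T
        · simpa [hT.star_eq] using star_left_conjugate_le_conjugate hsy T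
    _ ≤ C := by
        rw [hTyT]
        refine norm_cfc_le hC0 fun t ht => ?_
        have ht0 : 0 ≤ t := spectrum_nonneg_of_nonneg hy ht
        rw [Real.norm_of_nonneg (mul_nonneg ht0 (sub_nonneg.2 (hh1 t ht)))]
        exact hC t ht

lemma sqrt_div_add_mul_mul_sqrt_div_add {δ t : ℝ} (hδ : 0 < δ) (ht : 0 ≤ t) :
    Real.sqrt t / (t + δ) * t * (Real.sqrt t / (t + δ)) = (t / (t + δ)) ^ 2 := by
  have hss : Real.sqrt t * Real.sqrt t = t := Real.mul_self_sqrt ht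
  field_simp
  linear_combination t * hss

lemma div_add_sq_le_one {δ t : ℝ} (hδ : 0 < δ) (ht : 0 ≤ t) : (t / (t + δ)) ^ 2 ≤ 1 :=
  pow_le_one₀ (by positivity) ((div_le_one (by positivity)).2 (by linarith))

lemma mul_one_sub_div_add_sq_le {δ t : ℝ} (hδ : 0 < δ) (ht : 0 ≤ t) :
    t * (1 - (t / (t + δ)) ^ 2) ≤ 2 * δ := by
  rw [div_pow, one_sub_div (by positivity), ← mul_div_assoc, div_le_iff₀ (by positivity)]
  nlinarith [mul_nonneg ht (mul_pos hδ hδ).le, pow_pos hδ 3]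

section Order

variable {A : Type*} [NonUnitalCStarAlgebra A] [PartialOrder A] [StarOrderedRing A]

lemma norm_mul_cfcₙ_mul_sub_self_le {s y : A} (hs : IsSelfAdjoint s) (hsy : s * s ≤ y)
    {h : ℝ → ℝ} (hh : ContinuousOn h (quasispectrum ℝ y)) (h0 : h 0 = 0)
    (hh1 : ∀ t ∈ quasispectrum ℝ y, h t ≤ 1) {C : ℝ}
    (hC : ∀ t ∈ quasispectrum ℝ y, t * (1 - h t) ≤ C) :
    ‖s * cfcₙ h y * s - s * s‖ ≤ C := by
  have hy : IsSelfAdjoint y := .of_nonneg (hs.mul_self_nonneg.trans hsy)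
  have hσ := Unitization.quasispectrum_eq_spectrum_inr' ℝ ℂ y
  have hC0 : 0 ≤ C := by simpa using hC 0 (quasispectrum.zero_mem ℝ y)
  rw [← Unitization.norm_inr (𝕜 := ℂ)]
  push_cast
  rw [Unitization.real_cfcₙ_eq_cfc_inr y h h0]
  rw [hσ] at hh hh1 hC
  refine norm_mul_cfc_mul_sub_self_le (hs.inr ℂ) ?_ hh hh1 hC0 hC
  rw [← Unitization.inr_mul, Unitization.inr_le_iff _ _ hs.mul_self_nonneg.isSelfAdjoint hy]
  exact hsy

theorem CuntzLE.of_le {x y : A} (hx : 0 ≤ x) (hxy : x ≤ y) : CuntzLE x y := by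
  refine CuntzLE.of_forall_exists_norm_lt fun δ hδ => ?_
  have hy : 0 ≤ y := hx.trans hxy
  have hσ : ∀ t ∈ quasispectrum ℝ y, 0 ≤ t := quasispectrum_nonneg_of_nonneg y hy
  set η := δ / 3 with hη_def
  have hη : 0 < η := by positivity
  set g : ℝ → ℝ := fun t => Real.sqrt t / (t + η)
  have hg : ContinuousOn g (quasispectrum ℝ y) :=
    Real.continuous_sqrt.continuousOn.div (by fun_prop) fun t ht => by
      have := hσ t ht; positivity
  set s := CFC.sqrt x
  have hs : IsSelfAdjoint s := .of_nonneg (CFC.sqrt_nonneg x)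
  have hgy : IsSelfAdjoint (cfcₙ g y) := cfcₙ_predicate _ _
  have hconj : (s * cfcₙ g y) * y * star (s * cfcₙ g y) =
      s * cfcₙ (fun t => (t / (t + η)) ^ 2) y * s := by
    rw [star_mul, hgy.star_eq, hs.star_eq,
      ← cfcₙ_congr fun t ht => sqrt_div_add_mul_mul_sqrt_div_add hη (hσ t ht),
      ← cfcₙ_mul_mul_cfcₙ hy.isSelfAdjoint hg (by simp [g])]
    noncomm_ring
  refine ⟨s * cfcₙ g y, ?_⟩
  rw [hconj, ← CFC.sqrt_mul_sqrt_self x]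
  calc _ ≤ 2 * η := norm_mul_cfcₙ_mul_sub_self_le hs (by rwa [CFC.sqrt_mul_sqrt_self x])
          (by fun_prop (disch := intro t ht; have := hσ t ht; positivity)) (by simp)
          (fun t ht => div_add_sq_le_one hη (hσ t ht))
          (fun t ht => mul_one_sub_div_add_sq_le hη (hσ t ht))
    _ < δ := by linarith

lemma CStarAlgebra.star_left_conjugate_sub_norm_smul_le {a b : A} (ha : IsSelfAdjoint a)
    (hb : IsSelfAdjoint b) (c : A) :
    star c * a * c - ‖a - b‖ • (star c * c) ≤ star c * b * c := by
  have h := CStarAlgebra.star_left_conjugate_le_norm_smul (a := c) (ha.sub hb)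
  rw [mul_sub, sub_mul] at h
  exact sub_le_comm.mp h

end Order

section Cutoff

/-- `(t - ε)₊ / t`, with the denominator replaced by `max t ε` (which changes nothing where the
numerator is nonzero) so that it is continuous and vanishes at `0`. -/
noncomputable def cutoffQuot (ε t : ℝ) : ℝ := max 0 (t - ε) / max t ε

variable {ε : ℝ}

lemma continuous_cutoffQuot (hε : 0 < ε) : Continuous (cutoffQuot ε) :=
  Continuous.div (by fun_prop) (by fun_prop) fun t => (hε.trans_le (le_max_right t ε)).ne'

lemma cutoffQuot_nonneg (hε : 0 ≤ ε) (t : ℝ) : 0 ≤ cutoffQuot ε t :=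
  div_nonneg (le_max_left _ _) (hε.trans (le_max_right _ _))

lemma cutoffQuot_zero (hε : 0 ≤ ε) : cutoffQuot ε 0 = 0 := by
  simp [cutoffQuot, hε]

lemma mul_cutoffQuot (hε : 0 ≤ ε) (t : ℝ) : t * cutoffQuot ε t = max 0 (t - ε) := by
  rcases le_or_gt t ε with hte | hte
  · simp [cutoffQuot, max_eq_left (sub_nonpos.2 hte)]
  · rw [cutoffQuot, max_eq_left hte.le, mul_div_cancel₀ _ (by linarith)]

lemma one_sub_div_mul_posPart_sub_le (hε : 0 < ε) {r : ℝ} (hr : 0 ≤ r) (t : ℝ) :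
    (1 - r / ε) * max 0 (t - ε) ≤ max 0 (t - ε) - r * cutoffQuot ε t := by
  have h : r * cutoffQuot ε t ≤ r * (max 0 (t - ε) / ε) :=
    mul_le_mul_of_nonneg_left
      (div_le_div_of_nonneg_left (le_max_left _ _) hε (le_max_right _ _)) hr
  have e : (1 - r / ε) * max 0 (t - ε) = max 0 (t - ε) - r * (max 0 (t - ε) / ε) := by ring
  linarith

variable {A : Type*} [NonUnitalCStarAlgebra A] [PartialOrder A] [StarOrderedRing A]

lemma smul_cfcₙ_posPart_sub_le_conj {a b : A} (ha : IsSelfAdjoint a) (hb : IsSelfAdjoint b)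
    (hε : 0 < ε) :
    (1 - ‖a - b‖ / ε) • cfcₙ (fun t => max 0 (t - ε)) a ≤
      cfcₙ (fun t => Real.sqrt (cutoffQuot ε t)) a * b *
        cfcₙ (fun t => Real.sqrt (cutoffQuot ε t)) a := by
  set r := ‖a - b‖
  set c := cfcₙ (fun t => Real.sqrt (cutoffQuot ε t)) a
  have hc : IsSelfAdjoint c := cfcₙ_predicate _ _
  have hq := (continuous_cutoffQuot hε).continuousOn (s := quasispectrum ℝ a)
  have hq0 := cutoffQuot_zero hε.le
  have hm : ContinuousOn (fun t => max 0 (t - ε)) (quasispectrum ℝ a) := by fun_prop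
  have hm0 : max 0 (0 - ε) = 0 := by simp [hε.le]
  have hsq : ∀ t, Real.sqrt (cutoffQuot ε t) * Real.sqrt (cutoffQuot ε t) = cutoffQuot ε t :=
    fun t => Real.mul_self_sqrt (cutoffQuot_nonneg hε.le t)
  have hcac : c * a * c = cfcₙ (fun t => max 0 (t - ε)) a := by
    rw [cfcₙ_mul_mul_cfcₙ (f := fun t => Real.sqrt (cutoffQuot ε t)) ha
      (Real.continuous_sqrt.comp_continuousOn hq) (by simp [hq0])]
    refine cfcₙ_congr fun t _ => ?_
    rw [mul_right_comm, hsq, mul_comm, mul_cutoffQuot hε.le]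
  have hcc : c * c = cfcₙ (cutoffQuot ε) a := by
    rw [← cfcₙ_mul .., cfcₙ_congr fun t _ => hsq t]
  calc _ = cfcₙ (fun t => (1 - r / ε) * max 0 (t - ε)) a := (cfcₙ_const_mul _ _ a hm hm0).symm
    _ ≤ cfcₙ (fun t => max 0 (t - ε) - r * cutoffQuot ε t) a :=
        cfcₙ_mono (fun t _ => one_sub_div_mul_posPart_sub_le hε (norm_nonneg _) t)
          (continuousOn_const.mul hm) (hm.sub (continuousOn_const.mul hq))
          (by simp [hε.le]) (by simp [hε.le, hq0])
    _ = star c * a * c - r • (star c * c) := by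
        rw [hc.star_eq, hcac, hcc, cfcₙ_sub _ (fun t => r * cutoffQuot ε t) a hm hm0
          (continuousOn_const.mul hq) (by simp [hq0]), cfcₙ_const_mul r _ a hq hq0]
    _ ≤ c * b * c := by
        simpa [hc.star_eq] using
          CStarAlgebra.star_left_conjugate_sub_norm_smul_le ha hb c

end Cutoff

/-- If `a, b ≥ 0` in a C*-algebra and `‖a - b‖ < ε`, then
`(a - ε)₊ ≾ b`, where `(a - ε)₊` is the functional calculus of `t ↦ max 0 (t - ε)`. -/
theorem cutoff_cuntzLE_of_norm_lt {A : Type*} [NonUnitalCStarAlgebra A]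
    [PartialOrder A] [StarOrderedRing A]
    (a b : A) (ha : 0 ≤ a) (hb : 0 ≤ b) (ε : ℝ) (hε : 0 < ε)
    (h : ‖a - b‖ < ε) :
    CuntzLE (cfcₙ (fun t : ℝ => max 0 (t - ε)) a) b := by
  set c := cfcₙ (fun t => Real.sqrt (cutoffQuot ε t)) a
  have hc : IsSelfAdjoint c := cfcₙ_predicate _ _
  have hpos : 0 < 1 - ‖a - b‖ / ε := sub_pos.2 ((div_lt_one hε).2 h)
  have hconj : CuntzLE ((1 - ‖a - b‖ / ε) • cfcₙ (fun t => max 0 (t - ε)) a)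
      (c * b * star c) := by
    rw [hc.star_eq]
    exact .of_le (smul_nonneg hpos.le (cfcₙ_nonneg fun t _ => le_max_left _ _))
      (smul_cfcₙ_posPart_sub_le_conj ha.isSelfAdjoint hb.isSelfAdjoint hε)
  have hcut := hconj.of_cuntzLE_conj.smul_left (inv_nonneg.2 hpos.le)
  rwa [smul_smul, inv_mul_cancel₀ hpos.ne', one_smul] at hcut
end

section
/- Let A be a C*-algebra, let a be a positive element of A that is not Cuntz equivalent to a projection, and let δ > 0. Let g ∈ C₀(0,1] be a non-negative function with g = 0 on (δ,1), g > 0 on (0,δ), and ‖g‖ = 1. Then g(a) ≠ 0 and (a − δ)₊ + g(a) ≾ a. -/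
open Filter

/-- Cuntz equivalence. -/
def CuntzEq {A : Type*} [NonUnitalCStarAlgebra A] (a b : A) : Prop :=
  CuntzLE a b ∧ CuntzLE b a

lemma cuntzLE_of_eq' {A : Type*} [NonUnitalCStarAlgebra A] {a b v : A}
    (h : v * b * star v = a) : CuntzLE a b := by
  refine ⟨fun _ => v, ?_⟩
  simpa [h] using (tendsto_const_nhds : Tendsto (fun _ : ℕ => (0:ℝ)) atTop (nhds 0))

/-- If `a ≥ 0` (a contraction, so that its spectrum lies in `[0,1]`) is not
Cuntz equivalent to any projection, `δ > 0`, and `g ∈ C₀(0,1]` is nonnegative with `g = 0` on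
`(δ,1)`, `g > 0` on `(0,δ)` and `‖g‖ = 1`, then `g(a) ≠ 0` and `(a - δ)₊ + g(a) ≾ a`. -/
theorem cutoff_add_g_cuntzLE {A : Type*} [NonUnitalCStarAlgebra A]
    [PartialOrder A] [StarOrderedRing A]
    (a : A) (ha : 0 ≤ a) (ha1 : ‖a‖ ≤ 1)
    (hpure : ¬ ∃ p : A, IsSelfAdjoint p ∧ IsIdempotentElem p ∧ CuntzEq a p)
    (δ : ℝ) (hδ : 0 < δ) (hδ1 : δ < 1)
    (g : ℝ → ℝ) (hg_cont : Continuous g) (hg0 : g 0 = 0)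
    (hg_nonneg : ∀ t, 0 ≤ g t)
    (hg_zero : ∀ t ∈ Set.Ioo δ (1 : ℝ), g t = 0)
    (hg_pos : ∀ t ∈ Set.Ioo (0 : ℝ) δ, 0 < g t)
    (hg_le_one : ∀ t ∈ Set.Icc (0 : ℝ) 1, g t ≤ 1)
    (hg_norm : ∃ t ∈ Set.Icc (0 : ℝ) 1, g t = 1) :
    cfcₙ g a ≠ 0 ∧ CuntzLE (cfcₙ (fun t : ℝ => max 0 (t - δ)) a + cfcₙ g a) a := by
  have haSA : IsSelfAdjoint a := IsSelfAdjoint.of_nonneg ha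
  have hspec : ∀ x ∈ quasispectrum ℝ a, x ∈ Set.Icc (0:ℝ) 1 := by
    intro x hx
    refine ⟨quasispectrum_nonneg_of_nonneg a ha x hx, ?_⟩
    have h1 : ‖(id : ℝ → ℝ) x‖ ≤ ‖cfcₙ (id : ℝ → ℝ) a‖ :=
      norm_apply_le_norm_cfcₙ id a hx (by fun_prop) rfl haSA
    rw [cfcₙ_id ℝ a] at h1
    calc x ≤ |x| := le_abs_self x
      _ ≤ ‖a‖ := h1
      _ ≤ 1 := ha1
  constructor
  · -- g(a) ≠ 0
    intro hgz
    have hg_spec : ∀ x ∈ quasispectrum ℝ a, g x = 0 := by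
      intro x hx
      have := norm_apply_le_norm_cfcₙ g a hx hg_cont.continuousOn hg0 haSA
      rw [hgz, norm_zero] at this
      exact norm_le_zero_iff.mp this
    have hgap : ∀ x ∈ quasispectrum ℝ a, x = 0 ∨ δ ≤ x := by
      intro x hx
      rcases eq_or_lt_of_le (hspec x hx).1 with h0 | h0
      · exact Or.inl h0.symm
      · refine Or.inr ?_
        by_contra hlt
        push_neg at hlt
        exact (hg_pos x ⟨h0, hlt⟩).ne' (hg_spec x hx)
    set f : ℝ → ℝ := fun t => min 1 ((2/δ) * max 0 (t - δ/2)) with hf_def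
    have hf_cont : Continuous f := by fun_prop
    have hf0 : f 0 = 0 := by
      simp only [hf_def]
      rw [show max (0:ℝ) (0 - δ/2) = 0 from max_eq_left (by linarith), mul_zero,
        min_eq_right zero_le_one]
    have hf_nonneg : ∀ t, 0 ≤ f t := fun t =>
      le_min zero_le_one (mul_nonneg (by positivity) (le_max_left 0 _))
    have hf_one : ∀ t, δ ≤ t → f t = 1 := by
      intro t ht
      have h1 : max (0:ℝ) (t - δ/2) = t - δ/2 := max_eq_right (by linarith)
      have h2 : (1:ℝ) ≤ (2/δ) * (t - δ/2) := by
        rw [div_mul_eq_mul_div, le_div_iff₀ hδ]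
        nlinarith
      simp only [hf_def, h1]
      exact min_eq_left h2
    set p := cfcₙ f a with hp_def
    have hp_nonneg : (0:A) ≤ p := cfcₙ_nonneg fun x _ => hf_nonneg x
    have hpsa : IsSelfAdjoint p := hp_nonneg.isSelfAdjoint
    have hidem : IsIdempotentElem p := by
      unfold IsIdempotentElem
      rw [hp_def, ← cfcₙ_mul f f a hf_cont.continuousOn hf0 hf_cont.continuousOn hf0]
      apply cfcₙ_congr
      intro x hx
      rcases hgap x hx with h | h
      · simp [h, hf0]
      · simp [hf_one x h]
    have h1 : CuntzLE a p := by
      have hs_nonneg : (0:A) ≤ cfcₙ Real.sqrt a := cfcₙ_nonneg fun x _ => Real.sqrt_nonneg x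
      apply cuntzLE_of_eq' (v := cfcₙ Real.sqrt a)
      rw [hs_nonneg.isSelfAdjoint.star_eq, hp_def,
        ← cfcₙ_mul Real.sqrt f a (by fun_prop) Real.sqrt_zero hf_cont.continuousOn hf0,
        ← cfcₙ_mul _ Real.sqrt a (by fun_prop) (by simp [Real.sqrt_zero, hf0]) (by fun_prop)
          Real.sqrt_zero]
      conv_rhs => rw [← cfcₙ_id ℝ a haSA]
      apply cfcₙ_congr
      intro x hx
      rcases hgap x hx with h | h
      · simp [h, hf0, Real.sqrt_zero]
      · have hx0 : (0:ℝ) ≤ x := le_trans hδ.le h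
        simp only [hf_one x h, mul_one, id]
        exact Real.mul_self_sqrt hx0
    have h2 : CuntzLE p a := by
      set u : ℝ → ℝ := fun t => Real.sqrt (f t / max t (δ/4)) with hu_def
      have hu_cont : Continuous u := by
        refine Real.continuous_sqrt.comp (hf_cont.div (continuous_id.max continuous_const) ?_)
        intro t
        exact (lt_max_of_lt_right (by positivity)).ne'
      have hu0 : u 0 = 0 := by simp [hu_def, hf0]
      have hu_nonneg : (0:A) ≤ cfcₙ u a := cfcₙ_nonneg fun x _ => Real.sqrt_nonneg _
      apply cuntzLE_of_eq' (v := cfcₙ u a)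
      rw [hu_nonneg.isSelfAdjoint.star_eq, hp_def]
      have hmul : cfcₙ u a * a * cfcₙ u a = cfcₙ (fun t => u t * t * u t) a := by
        rw [cfcₙ_mul (fun t => u t * t) u a ((hu_cont.mul continuous_id).continuousOn)
            (by simp [hu0]) hu_cont.continuousOn hu0,
          cfcₙ_mul u (fun x => x) a hu_cont.continuousOn hu0 (by fun_prop) rfl, cfcₙ_id' ℝ a]
      rw [hmul]
      apply cfcₙ_congr
      intro x hx
      rcases hgap x hx with h | h
      · simp [h, hu0, hf0]
      · have hx0 : (0:ℝ) < x := lt_of_lt_of_le hδ h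
        have hmax : max x (δ/4) = x := max_eq_left (by linarith)
        simp only [hu_def, id, hmax]
        calc Real.sqrt (f x / x) * x * Real.sqrt (f x / x)
            = Real.sqrt (f x / x) * Real.sqrt (f x / x) * x := by ring
          _ = f x / x * x := by
              rw [Real.mul_self_sqrt (div_nonneg (hf_nonneg x) hx0.le)]
          _ = f x := div_mul_cancel₀ _ hx0.ne'
    exact hpure ⟨p, hpsa, hidem, h1, h2⟩
  · -- (a - δ)₊ + g(a) ≾ a
    set h : ℝ → ℝ := fun t => max 0 (t - δ) + g t with hh_def
    have hh_cont : Continuous h := by fun_prop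
    have hh0 : h 0 = 0 := by
      simp only [hh_def, hg0, add_zero]
      exact max_eq_left (by linarith)
    have hh_nonneg : ∀ t, 0 ≤ h t := fun t => add_nonneg (le_max_left 0 _) (hg_nonneg t)
    have hpp0 : max (0:ℝ) (0 - δ) = 0 := max_eq_left (by linarith)
    have hsum : cfcₙ (fun t : ℝ => max 0 (t - δ)) a + cfcₙ g a = cfcₙ h a := by
      rw [hh_def]
      exact (cfcₙ_add (fun t : ℝ => max 0 (t - δ)) g a (by fun_prop) hpp0
        hg_cont.continuousOn hg0).symm
    rw [hsum]
    -- the approximating functions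
    set u : ℕ → ℝ → ℝ := fun n t => Real.sqrt (h t / max t (1/(n+1))) with hu_def
    have hun_cont : ∀ n, Continuous (u n) := by
      intro n
      refine Real.continuous_sqrt.comp (hh_cont.div (continuous_id.max continuous_const) ?_)
      intro t
      exact (lt_max_of_lt_right (by positivity)).ne'
    have hun0 : ∀ n, u n 0 = 0 := by intro n; simp [hu_def, hh0]
    refine ⟨fun n => cfcₙ (u n) a, ?_⟩
    rw [Metric.tendsto_atTop]
    intro η hη
    obtain ⟨ε₀, hε₀_pos, hε₀⟩ := Metric.continuous_iff.mp hh_cont 0 (η/2) (by positivity)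
    obtain ⟨N, hN⟩ := exists_nat_one_div_lt hε₀_pos
    refine ⟨N, fun n hn => ?_⟩
    have hεn : (1:ℝ)/(n+1) ≤ 1/(N+1) := by
      apply one_div_le_one_div_of_le (by positivity)
      exact_mod_cast by omega
    have hεn_pos : (0:ℝ) < 1/(n+1) := by positivity
    have hun_nonneg : (0:A) ≤ cfcₙ (u n) a := cfcₙ_nonneg fun x _ => Real.sqrt_nonneg _
    have hkey : cfcₙ (u n) a * a * star (cfcₙ (u n) a)
        = cfcₙ (fun t => u n t * t * u n t) a := by
      rw [hun_nonneg.isSelfAdjoint.star_eq,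
        cfcₙ_mul (fun t => u n t * t) (u n) a (((hun_cont n).mul continuous_id).continuousOn)
          (by simp [hun0 n]) (hun_cont n).continuousOn (hun0 n),
        cfcₙ_mul (u n) (fun x => x) a (hun_cont n).continuousOn (hun0 n) (by fun_prop) rfl,
        cfcₙ_id' ℝ a]
    rw [Real.dist_eq, sub_zero, abs_of_nonneg (norm_nonneg _), hkey,
      ← cfcₙ_sub (fun t => u n t * t * u n t) h a
        (by have := hun_cont n; fun_prop) (by simp [hun0 n]) hh_cont.continuousOn hh0]
    refine lt_of_le_of_lt (norm_cfcₙ_le fun x hx => ?_) (by linarith : η/2 < η)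
    obtain ⟨hx0, hx1⟩ := hspec x hx
    have hmaxpos : (0:ℝ) < max x (1/(n+1)) := lt_max_of_lt_right hεn_pos
    have hsq : u n x * x * u n x = h x / max x (1/(n+1)) * x := by
      calc u n x * x * u n x = u n x * u n x * x := by ring
        _ = h x / max x (1/(n+1)) * x := by
            rw [hu_def]
            rw [Real.mul_self_sqrt (div_nonneg (hh_nonneg x) hmaxpos.le)]
    rw [Real.norm_eq_abs, hsq]
    rcases le_or_gt (1/(n+1) : ℝ) x with hc | hc
    · have hmax : max x (1/(n+1)) = x := max_eq_left hc
      have hxpos : (0:ℝ) < x := lt_of_lt_of_le hεn_pos hc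
      rw [hmax, div_mul_cancel₀ _ hxpos.ne', sub_self, abs_zero]
      positivity
    · have hmax : max x (1/(n+1)) = 1/(n+1) := max_eq_right hc.le
      have hxsmall : h x ≤ η/2 := by
        have : dist x 0 < ε₀ := by
          rw [Real.dist_eq, sub_zero, abs_of_nonneg hx0]
          calc x < 1/(n+1) := hc
            _ ≤ 1/(N+1) := hεn
            _ < ε₀ := hN
        have := hε₀ x this
        rw [Real.dist_eq, hh0, sub_zero] at this
        exact le_of_lt (lt_of_le_of_lt (le_abs_self _) this)
      have hnum_nonneg : 0 ≤ h x / max x (1/(n+1)) * x :=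
        mul_nonneg (div_nonneg (hh_nonneg x) hmaxpos.le) hx0
      have hnum_le : h x / max x (1/(n+1)) * x ≤ h x := by
        rw [hmax, div_mul_eq_mul_div, div_le_iff₀ hεn_pos]
        exact mul_le_mul_of_nonneg_left hc.le (hh_nonneg x)
      have : |h x / max x (1/(n+1)) * x - h x| ≤ h x := by
        rw [abs_le]
        constructor <;> [linarith [hh_nonneg x]; linarith]
      linarith
end

section
/- For every ε > 0 there exists δ > 0 such that for any C*-algebra A and any positive contractions x, a ∈ A with ‖xa − ax‖ < δ, one has ‖x^{1/2} a − a x^{1/2}‖ < ε. -/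
/-!
Commutators with a fixed `a` satisfy `‖[xⁿ, a]‖ ≤ n ‖[x, a]‖` for `‖x‖ ≤ 1`, so a polynomial `q`
satisfies `‖[q(x), a]‖ ≤ C_q ‖[x, a]‖` with `C_q` depending only on the coefficients of `q`.
The spectrum of a positive contraction lies in `[0, 1]`, where Weierstrass gives a polynomial `q`
with `|√t - q(t)| ≤ ε/4`; the isometric functional calculus turns this into `‖x^{1/2} - q(x)‖ ≤ ε/4`
in every C*-algebra at once, so `δ` depends on `ε` only through `q`.
-/

open Polynomial Finset

section NormedRing

variable {R : Type*} [NormedRing R]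

lemma norm_pow_mul_le_of_norm_le_one {x : R} (hx : ‖x‖ ≤ 1) (y : R) (n : ℕ) :
    ‖x ^ n * y‖ ≤ ‖y‖ := by
  induction n with
  | zero => simp
  | succ n ih =>
    calc ‖x ^ (n + 1) * y‖ = ‖x * (x ^ n * y)‖ := by rw [pow_succ', mul_assoc]
      _ ≤ ‖x‖ * ‖x ^ n * y‖ := norm_mul_le _ _
      _ ≤ 1 * ‖y‖ := by gcongr
      _ = ‖y‖ := one_mul _

lemma norm_pow_mul_sub_mul_pow_le {x : R} (hx : ‖x‖ ≤ 1) (a : R) (n : ℕ) :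
    ‖x ^ n * a - a * x ^ n‖ ≤ n * ‖x * a - a * x‖ := by
  induction n with
  | zero => simp
  | succ n ih =>
    have telescope : x ^ (n + 1) * a - a * x ^ (n + 1)
        = x ^ n * (x * a - a * x) + (x ^ n * a - a * x ^ n) * x := by
      rw [pow_succ]
      noncomm_ring
    calc ‖x ^ (n + 1) * a - a * x ^ (n + 1)‖
        ≤ ‖x ^ n * (x * a - a * x)‖ + ‖x ^ n * a - a * x ^ n‖ * ‖x‖ := by
          rw [telescope]
          exact (norm_add_le _ _).trans (add_le_add_right (norm_mul_le _ _) _)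
      _ ≤ ‖x * a - a * x‖ + n * ‖x * a - a * x‖ * 1 := by
          gcongr
          exact norm_pow_mul_le_of_norm_le_one hx _ n
      _ = (n + 1 : ℕ) * ‖x * a - a * x‖ := by push_cast; ring

lemma norm_mul_sub_mul_le_norm_sub_add {s q a : R} :
    ‖s * a - a * s‖ ≤ 2 * ‖s - q‖ * ‖a‖ + ‖q * a - a * q‖ := by
  have split : s * a - a * s = (s - q) * a - a * (s - q) + (q * a - a * q) := by noncomm_ring
  calc ‖s * a - a * s‖ ≤ ‖(s - q) * a‖ + ‖a * (s - q)‖ + ‖q * a - a * q‖ := by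
        rw [split]
        exact (norm_add_le _ _).trans (add_le_add_left (norm_sub_le _ _) _)
    _ ≤ ‖s - q‖ * ‖a‖ + ‖a‖ * ‖s - q‖ + ‖q * a - a * q‖ := by
        gcongr <;> exact norm_mul_le _ _
    _ = 2 * ‖s - q‖ * ‖a‖ + ‖q * a - a * q‖ := by ring

variable {𝕜 : Type*} [NormedField 𝕜] [NormedAlgebra 𝕜 R]

lemma norm_aeval_mul_sub_mul_aeval_le {x : R} (hx : ‖x‖ ≤ 1) (a : R) (p : 𝕜[X]) :
    ‖aeval x p * a - a * aeval x p‖ ≤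
      (∑ i ∈ range (p.natDegree + 1), ‖p.coeff i‖ * i) * ‖x * a - a * x‖ := by
  have linear : aeval x p * a - a * aeval x p
      = ∑ i ∈ range (p.natDegree + 1), p.coeff i • (x ^ i * a - a * x ^ i) := by
    simp only [aeval_eq_sum_range, Finset.sum_mul, Finset.mul_sum, ← Finset.sum_sub_distrib,
      smul_sub, smul_mul_assoc, mul_smul_comm]
  rw [linear, Finset.sum_mul]
  refine (norm_sum_le _ _).trans (Finset.sum_le_sum fun i _ => ?_)
  rw [norm_smul, mul_assoc]
  exact mul_le_mul_of_nonneg_left (norm_pow_mul_sub_mul_pow_le hx a i) (norm_nonneg _)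

end NormedRing

lemma exists_polynomial_norm_cfc_sub_aeval_le {a b : ℝ} {f : ℝ → ℝ}
    (hf : ContinuousOn f (Set.Icc a b)) {ε : ℝ} (hε : 0 < ε) :
    ∃ q : ℝ[X], ∀ {A : Type*} [NormedRing A] [StarRing A] [NormedAlgebra ℝ A]
      {p : A → Prop} [IsometricContinuousFunctionalCalculus ℝ A p] (x : A), p x →
      spectrum ℝ x ⊆ Set.Icc a b → ‖cfc f x - aeval x q‖ ≤ ε := by
  obtain ⟨q, hq⟩ := exists_polynomial_near_of_continuousOn a b f hf ε hε
  refine ⟨q, fun x hx hspec => ?_⟩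
  rw [← cfc_polynomial q x, ← cfc_sub f _ x (hf.mono hspec)]
  refine norm_cfc_le hε.le fun t ht => ?_
  rw [Real.norm_eq_abs, abs_sub_comm]
  exact (hq t (hspec ht)).le

lemma spectrum_subset_Icc_of_nonneg_of_norm_le_one {A : Type*} [CStarAlgebra A] [PartialOrder A]
    [StarOrderedRing A] {x : A} (hx : 0 ≤ x) (hx1 : ‖x‖ ≤ 1) : spectrum ℝ x ⊆ Set.Icc 0 1 := by
  nontriviality A
  exact fun t ht => ⟨spectrum_nonneg_of_nonneg hx ht,
    (le_abs_self t).trans ((spectrum.norm_le_norm_of_mem ht).trans hx1)⟩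

/-- For every `ε > 0` there is `δ > 0` such that in any (unital) C*-algebra,
for positive contractions `x, a` with `‖x * a - a * x‖ < δ` one has
`‖x^{1/2} * a - a * x^{1/2}‖ < ε`. -/
theorem sqrt_approx_commute : ∀ ε : ℝ, 0 < ε → ∃ δ : ℝ, 0 < δ ∧
    ∀ (A : Type) [CStarAlgebra A] [PartialOrder A] [StarOrderedRing A]
      (x a : A), 0 ≤ x → ‖x‖ ≤ 1 → 0 ≤ a → ‖a‖ ≤ 1 →
      ‖x * a - a * x‖ < δ →
      ‖cfc (fun t : ℝ => Real.sqrt t) x * a - a * cfc (fun t : ℝ => Real.sqrt t) x‖ < ε := by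
  intro ε hε
  obtain ⟨q, hq⟩ := exists_polynomial_norm_cfc_sub_aeval_le (a := 0) (b := 1)
    Real.continuous_sqrt.continuousOn (show 0 < ε / 4 by positivity)
  set C := ∑ i ∈ range (q.natDegree + 1), ‖q.coeff i‖ * i
  have hC : 0 ≤ C := Finset.sum_nonneg fun i _ => by positivity
  refine ⟨ε / (2 * (C + 1)), by positivity, fun A _ _ _ x a hx hx1 _ ha1 hxa => ?_⟩
  have hsqrt := hq x hx.isSelfAdjoint (spectrum_subset_Icc_of_nonneg_of_norm_le_one hx hx1)
  have hpoly := norm_aeval_mul_sub_mul_aeval_le hx1 a q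
  have hcomm : C * ‖x * a - a * x‖ < ε / 2 :=
    calc C * ‖x * a - a * x‖ ≤ (C + 1) * ‖x * a - a * x‖ := by gcongr; linarith
      _ < (C + 1) * (ε / (2 * (C + 1))) := by gcongr
      _ = ε / 2 := by field_simp
  calc _ ≤ 2 * ‖cfc (fun t : ℝ => Real.sqrt t) x - aeval x q‖ * ‖a‖
        + ‖aeval x q * a - a * aeval x q‖ := norm_mul_sub_mul_le_norm_sub_add
    _ ≤ 2 * (ε / 4) * 1 + C * ‖x * a - a * x‖ := by gcongr
    _ < ε := by linarith
end
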